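/- For n ≥ 3, the join-irreducible partitions of n+1 that are not sons (under the map η choosing the unique join-irreducible son, with η(2,1,…,1) defined as the right son (2,2,1,…,1)) of join-irreducible partitions of n are exactly: the partition (2,1,1,…,1) of n+1, and the partitions (3,…,3,1,…,1) of n+1 with at least one 3 and at least one 1. -/

import Mathlib

def IsPartition (n : ℕ) (a : ℕ → ℕ) : Prop :=
  (∀ i j, i ≤ j → a j ≤ a i) ∧ (∑ i ∈ Finset.range n, a i = n) ∧ (∀ i, n ≤ i → a i = 0)

def Dom (a b : ℕ → ℕ) : Prop :=
  ∀ j, ∑ i ∈ Finset.range j, a i ≤ ∑ i ∈ Finset.range j, b i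

def IsSupOf (n : ℕ) (a b c : ℕ → ℕ) : Prop :=
  IsPartition n c ∧ Dom a c ∧ Dom b c ∧
    ∀ d, IsPartition n d → Dom a d → Dom b d → Dom c d

def IsInfOf (n : ℕ) (a b c : ℕ → ℕ) : Prop :=
  IsPartition n c ∧ Dom c a ∧ Dom c b ∧
    ∀ d, IsPartition n d → Dom d a → Dom d b → Dom d c

/-- The minimum partition (1,1,…,1) of n. -/
def ones (n : ℕ) : ℕ → ℕ := fun i => if i < n then 1 else 0

/-- A partition of n is join-irreducible in the dominance lattice: it is not
the minimum and whenever it is the join of two partitions it equals one of them. -/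
def JoinIrr (n : ℕ) (a : ℕ → ℕ) : Prop :=
  IsPartition n a ∧ a ≠ ones n ∧
    ∀ b c, IsPartition n b → IsPartition n c → IsSupOf n b c a → a = b ∨ a = c
def downAt (i : ℕ) (a : ℕ → ℕ) : ℕ → ℕ := fun j => if j = i then a j + 1 else a j

/-- Remove one grain from the first column. -/
def dec1 (a : ℕ → ℕ) : ℕ → ℕ := fun i => if i = 0 then a 0 - 1 else a i

/-- Slippery plateau at the first column, of length l ≥ 1 (0-based entries):
entries 0..l are equal and the height difference at position l is 1. -/
def SlipperyPlateau1 (a : ℕ → ℕ) (l : ℕ) : Prop :=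
  1 ≤ l ∧ (∀ i ≤ l, a i = a 0) ∧ a l = a (l + 1) + 1

/-- Non-slippery plateau at the first column: a plateau of length ≥ 1 ending at a cliff. -/
def NonSlipperyPlateau1 (a : ℕ → ℕ) : Prop :=
  ∃ k, 1 ≤ k ∧ (∀ i ≤ k, a i = a 0) ∧ a (k + 1) + 2 ≤ a k

/-- Slippery step at the first column. -/
def SlipperyStep1 (a : ℕ → ℕ) : Prop := ∃ l, SlipperyPlateau1 (dec1 a) l

/-- Non-slippery step at the first column. -/
def NonSlipperyStep1 (a : ℕ → ℕ) : Prop := NonSlipperyPlateau1 (dec1 a)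

/-- b is a son of the partition a of n: either the left son α↓₁, or the right
son α↓₂ (for a step at 1), or α↓_{l+2} (for a slippery plateau of length l at 1). -/
def Son (n : ℕ) (a b : ℕ → ℕ) : Prop :=
  IsPartition n a ∧ IsPartition (n + 1) b ∧
    (b = downAt 0 a ∨
     ((SlipperyStep1 a ∨ NonSlipperyStep1 a) ∧ b = downAt 1 a) ∨
     (∃ l, SlipperyPlateau1 a l ∧ b = downAt (l + 1) a))

/-- The partition (2,1,…,1) of n. -/
def twoOnes (n : ℕ) : ℕ → ℕ := fun i => if i = 0 then 2 else if i < n - 1 then 1 else 0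
/-- The partition (2,2,1,…,1) of k. -/
def twoTwoOnes (k : ℕ) : ℕ → ℕ := fun i => if i < 2 then 2 else if i < k - 2 then 1 else 0

/-- The partition with m threes followed by l ones. -/
def threesOnes (m l : ℕ) : ℕ → ℕ := fun i => if i < m then 3 else if i < m + l then 1 else 0

/-!
A partition is join-irreducible in the dominance order exactly when it has a single lower move
of one grain. Two lower moves whose ranges of affected partial sums are disjoint (or, as for
`(3^p, 2^q, 1^r)`, meet in one index where the concavity of partial sums takes over) present it as
the join of two smaller partitions; conversely, for a shape `((c+1)^p, c^q, 1^r)` with a unique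
move, every partition strictly below it lies below that move. This singles out the shapes with
`c, p ≥ 1`, `r = 0` when `c = 1`, other than `(3^p, 2^q, 1^r)` with `q, r ≥ 1`.

Removing a grain from the last row of the first block of such a shape of `n + 1` gives a partition
of `n` of which it is the join-irreducible son, and this parent is again join-irreducible, except
for `(2, 1, …, 1)` (parent `(1, …, 1)`), `(2, 2, 1, …, 1)` (parent `(2, 1, …, 1)`, the exception in
`η`) and `(3^m, 1^l)` (parent `(3^(m-1), 2, 1^l)`, or `(2, 1, …, 1)` when `m = 1`). Conversely,
these two are sons only of `(1, …, 1)`, of `(3^(m-1), 2, 1^l)`, which is not join-irreducible,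
and of `(2, 1, …, 1)`, whose image under `η` is `(2, 2, 1, …, 1)`.
-/

abbrev psum (a : ℕ → ℕ) (j : ℕ) : ℕ := ∑ i ∈ Finset.range j, a i

@[simp] lemma psum_zero (a : ℕ → ℕ) : psum a 0 = 0 := Finset.sum_range_zero a

lemma psum_succ (a : ℕ → ℕ) (j : ℕ) : psum a (j + 1) = psum a j + a j :=
  Finset.sum_range_succ a j

lemma Dom.psum_le {a b : ℕ → ℕ} (h : Dom a b) (k : ℕ) : psum a k ≤ psum b k := h k

lemma psum_eq_add_mul {a : ℕ → ℕ} {v A B : ℕ} (hAB : A ≤ B)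
    (h : ∀ i, A ≤ i → i < B → a i = v) : psum a B = psum a A + (B - A) * v := by
  simp only [psum]
  rw [← Finset.sum_range_add_sum_Ico a hAB,
    Finset.sum_congr rfl fun i hi => h i (Finset.mem_Ico.1 hi).1 (Finset.mem_Ico.1 hi).2]
  simp

lemma add_mul_le_psum {a : ℕ → ℕ} {v A B : ℕ} (hAB : A ≤ B)
    (h : ∀ i, A ≤ i → i < B → v ≤ a i) : psum a A + (B - A) * v ≤ psum a B := by
  simp only [psum]
  rw [← Finset.sum_range_add_sum_Ico a hAB]
  have := Finset.card_nsmul_le_sum (Finset.Ico A B) a v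
    fun i hi => h i (Finset.mem_Ico.1 hi).1 (Finset.mem_Ico.1 hi).2
  simp only [Nat.card_Ico, smul_eq_mul] at this
  exact Nat.add_le_add_left this _

lemma apply_le_of_psum_lt {x : ℕ → ℕ} (hx : Antitone x) {i j v : ℕ} (hji : j ≤ i)
    (h : psum x (i + 1) < psum x j + (i + 1 - j) * (v + 1)) : x i ≤ v := by
  by_contra! hv
  have := add_mul_le_psum (a := x) (v := v + 1) (by omega : j ≤ i + 1)
    fun k _ hk => hv.trans_le (hx (by omega))
  omega

section IsPartition

variable {N : ℕ} {a : ℕ → ℕ}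

lemma IsPartition.antitone (h : IsPartition N a) : Antitone a := fun _ _ hij => h.1 _ _ hij

lemma IsPartition.eq_zero (h : IsPartition N a) {i : ℕ} (hi : N ≤ i) : a i = 0 := h.2.2 i hi

lemma IsPartition.psum_of_le (h : IsPartition N a) {j : ℕ} (hj : N ≤ j) : psum a j = N := by
  rw [psum_eq_add_mul hj fun i hi _ => h.eq_zero hi]
  simpa using h.2.1

lemma IsPartition.eq_of_le {b : ℕ → ℕ} (ha : IsPartition N a) (hb : IsPartition N b)
    (h : ∀ i, a i ≤ b i) : a = b := by
  have heq := (Finset.sum_eq_sum_iff_of_le fun i (_ : i ∈ Finset.range N) => h i).1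
    (ha.2.1.trans hb.2.1.symm)
  funext i
  rcases lt_or_ge i N with hi | hi
  · exact heq i (Finset.mem_range.2 hi)
  · rw [ha.eq_zero hi, hb.eq_zero hi]

lemma IsPartition.exists_threshold (h : IsPartition N a) {t : ℕ} (ht : 1 ≤ t) :
    ∃ T, ∀ k, t ≤ a k ↔ k < T := by
  classical
  have hex : ∃ k, a k < t := ⟨N, by rw [h.eq_zero le_rfl]; omega⟩
  refine ⟨Nat.find hex, fun k => ⟨fun hk => ?_, fun hk => not_lt.1 (Nat.find_min hex hk)⟩⟩
  by_contra! hle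
  exact (Nat.find_spec hex).not_ge (hk.trans (h.antitone hle))

lemma isPartition_ones (N : ℕ) : IsPartition N (ones N) := by
  refine ⟨fun i j hij => ?_, ?_, fun i hi => if_neg (by omega)⟩
  · simp only [ones]; split_ifs <;> omega
  · simp only [ones]
    rw [Finset.sum_congr rfl fun i hi => if_pos (Finset.mem_range.1 hi)]
    simp

lemma IsPartition.two_le (h : IsPartition N a) (hne : a ≠ ones N) : 2 ≤ a 0 := by
  by_contra! h0
  refine hne (h.eq_of_le (isPartition_ones N) fun i => ?_)
  have := h.antitone (Nat.zero_le i)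
  simp only [ones]; split_ifs with hi
  · omega
  · rw [h.eq_zero (not_lt.1 hi)]

end IsPartition

def moveGrain (i j : ℕ) (b : ℕ → ℕ) : ℕ → ℕ := fun k =>
  if k = i then b i - 1 else if k = j then b j + 1 else b k

section moveGrain

variable {N i j : ℕ} {b : ℕ → ℕ}

lemma psum_moveGrain (hij : i < j) (hbi : 1 ≤ b i) (k : ℕ) :
    psum (moveGrain i j b) k + (if i < k ∧ k ≤ j then 1 else 0) = psum b k := by
  induction k with
  | zero => simp [psum]
  | succ k ih =>
    rw [psum_succ, psum_succ]
    simp only [moveGrain] at ih ⊢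
    split_ifs at ih ⊢ <;> subst_vars <;> omega

lemma psum_moveGrain_of_not_mem (hij : i < j) (hbi : 1 ≤ b i) {k : ℕ} (hk : k ≤ i ∨ j < k) :
    psum (moveGrain i j b) k = psum b k := by
  have := psum_moveGrain hij hbi k
  rwa [if_neg (by omega), add_zero] at this

lemma psum_moveGrain_add_one (hij : i < j) (hbi : 1 ≤ b i) {k : ℕ} (hik : i < k) (hkj : k ≤ j) :
    psum (moveGrain i j b) k + 1 = psum b k := by
  have := psum_moveGrain hij hbi k
  rwa [if_pos ⟨hik, hkj⟩] at this

lemma dom_moveGrain (hij : i < j) (hbi : 1 ≤ b i) : Dom (moveGrain i j b) b := fun k => by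
  show psum _ k ≤ psum b k
  have := psum_moveGrain hij hbi k
  omega

lemma moveGrain_ne (hij : i < j) (hbi : 1 ≤ b i) : moveGrain i j b ≠ b := fun h => by
  have := psum_moveGrain_add_one hij hbi hij le_rfl
  rw [h] at this
  omega

lemma isPartition_moveGrain (hb : IsPartition N b) (hij : i < j) (hjN : j < N)
    (hgap : b j + 2 ≤ b i) (hi : i + 1 = j ∨ b (i + 1) + 1 ≤ b i)
    (hj : i + 1 = j ∨ b j + 1 ≤ b (j - 1)) : IsPartition N (moveGrain i j b) := by
  refine ⟨fun _ _ h => antitone_nat_of_succ_le (fun k => ?_) h, ?_, fun k hk => ?_⟩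
  · have := hb.antitone (Nat.le_add_right k 1)
    simp only [moveGrain]
    split_ifs <;> subst_vars <;> (try simp only [Nat.add_sub_cancel] at *) <;> omega
  · have := psum_moveGrain hij (by omega : 1 ≤ b i) N
    rw [if_neg (show ¬(i < N ∧ N ≤ j) by omega), add_zero] at this
    exact this.trans hb.2.1
  · simp only [moveGrain, if_neg (show k ≠ i by omega), if_neg (show k ≠ j by omega)]
    exact hb.eq_zero hk

/-- The move from the last row of the plateau of row `K` to the first row that is at least two
lower. -/
lemma isPartition_moveGrain_of_threshold {K T T' : ℕ} (hb : IsPartition N b)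
    (hK : 2 ≤ b K) (hT : ∀ k, b K ≤ b k ↔ k < T) (hT' : ∀ k, b K - 1 ≤ b k ↔ k < T') :
    K < T ∧ T ≤ T' ∧ 1 ≤ b (T - 1) ∧ IsPartition N (moveGrain (T - 1) T' b) := by
  have hKT : K < T := (hT K).1 le_rfl
  have hTT' : T ≤ T' := by
    by_contra! h
    exact (lt_irrefl T') ((hT' T').1 (by have := (hT T').2 h; omega))
  have hlast : b (T - 1) = b K :=
    le_antisymm (hb.antitone (by omega)) ((hT (T - 1)).2 (by omega))
  have hT'low : b T' + 2 ≤ b K := by have := (hT' T').not.2 (lt_irrefl T'); omega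
  have hmid : ∀ k, T ≤ k → k < T' → b k + 1 = b K := fun k h1 h2 => by
    have := (hT k).not.2 (by omega); have := (hT' k).2 h2; omega
  have hKN : K < N := by
    by_contra! h
    rw [hb.eq_zero h] at hK
    omega
  have hT'N : T' < N := by
    by_contra! h
    have hpos : ∀ k, k < N → 1 ≤ b k := fun k hk => by have := (hT' k).2 (by omega); omega
    have h1 := add_mul_le_psum (a := b) (v := 1) (Nat.zero_le K) fun k _ hk => hpos k (by omega)
    have h2 := add_mul_le_psum (a := b) (v := 1) (by omega : K + 1 ≤ N) fun k _ hk => hpos k hk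
    have := psum_succ b K
    have := hb.psum_of_le le_rfl
    rw [psum_zero] at h1
    omega
  refine ⟨hKT, hTT', by omega, isPartition_moveGrain hb (by omega) hT'N (by omega) ?_ ?_⟩
  · rcases eq_or_lt_of_le hTT' with h | h
    · exact .inl (by omega)
    · exact .inr (by rw [Nat.sub_add_cancel (by omega : 1 ≤ T)]; have := hmid T le_rfl h; omega)
  · rcases eq_or_lt_of_le hTT' with h | h
    · exact .inl (by omega)
    · exact .inr (by have := hmid (T' - 1) (by omega) (by omega); omega)

end moveGrain

section joinIrr

variable {N i j : ℕ} {b : ℕ → ℕ}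

lemma isSupOf_of_cover {x y : ℕ → ℕ} (hb : IsPartition N b) (hx : Dom x b) (hy : Dom y b)
    (hcov : ∀ k, psum x k = psum b k ∨ psum y k = psum b k) : IsSupOf N x y b := by
  refine ⟨hb, hx, hy, fun d _ hxd hyd k => ?_⟩
  show psum b k ≤ psum d k
  rcases hcov k with h | h
  · exact h ▸ hxd.psum_le k
  · exact h ▸ hyd.psum_le k

lemma not_joinIrr_of_isSupOf_moveGrain {i' j' : ℕ} (hij : i < j) (hbi : 1 ≤ b i)
    (hij' : i' < j') (hbi' : 1 ≤ b i') (hx : IsPartition N (moveGrain i j b))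
    (hy : IsPartition N (moveGrain i' j' b))
    (hsup : IsSupOf N (moveGrain i j b) (moveGrain i' j' b) b) : ¬ JoinIrr N b := fun hJ =>
  (hJ.2.2 _ _ hx hy hsup).elim (moveGrain_ne hij hbi ·.symm) (moveGrain_ne hij' hbi' ·.symm)

lemma not_joinIrr_of_disjoint_moves {i' j' : ℕ} (hb : IsPartition N b) (hij : i < j)
    (hji' : j ≤ i') (hij' : i' < j') (hbi : 1 ≤ b i) (hbi' : 1 ≤ b i')
    (hx : IsPartition N (moveGrain i j b)) (hy : IsPartition N (moveGrain i' j' b)) :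
    ¬ JoinIrr N b := by
  refine not_joinIrr_of_isSupOf_moveGrain hij hbi hij' hbi' hx hy <|
    isSupOf_of_cover hb (dom_moveGrain hij hbi) (dom_moveGrain hij' hbi') fun k => ?_
  rcases le_or_gt k j with hk | hk
  · exact .inr (psum_moveGrain_of_not_mem hij' hbi' (by omega))
  · exact .inl (psum_moveGrain_of_not_mem hij hbi (by omega))

/-- The two moves both lower the partial sum at `j`, but `b (j - 1) ≤ b j + 1` and the concavity
of the partial sums of any upper bound force it back up to that of `b`. -/
lemma not_joinIrr_of_overlapping_moves {j' : ℕ} (hb : IsPartition N b) (hij : i < j)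
    (hjj' : j < j') (hbi : 1 ≤ b i) (hbj : 1 ≤ b (j - 1)) (hstep : b (j - 1) ≤ b j + 1)
    (hx : IsPartition N (moveGrain i j b)) (hy : IsPartition N (moveGrain (j - 1) j' b)) :
    ¬ JoinIrr N b := by
  have hij' : j - 1 < j' := by omega
  refine not_joinIrr_of_isSupOf_moveGrain hij hbi hij' hbj hx hy
    ⟨hb, dom_moveGrain hij hbi, dom_moveGrain hij' hbj, fun d hd hxd hyd k => ?_⟩
  show psum b k ≤ psum d k
  rcases lt_trichotomy k j with hk | rfl | hk
  · exact psum_moveGrain_of_not_mem hij' hbj (k := k) (by omega) ▸ hyd.psum_le k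
  · have hprev := psum_moveGrain_of_not_mem hij' hbj (k := k - 1) (by omega) ▸ hyd.psum_le (k - 1)
    have hnext := psum_moveGrain_of_not_mem hij hbi (k := k + 1) (by omega) ▸ hxd.psum_le (k + 1)
    have hcur := hxd.psum_le k
    have hmv := psum_moveGrain_add_one hij hbi hij le_rfl
    have hconc := hd.antitone (Nat.sub_le k 1)
    have := psum_succ d (k - 1); have := psum_succ b (k - 1)
    have := psum_succ d k; have := psum_succ b k
    rw [Nat.sub_add_cancel (by omega : 1 ≤ k)] at *
    omega
  · exact psum_moveGrain_of_not_mem hij hbi (k := k) (by omega) ▸ hxd.psum_le k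

/-- Every other partition below `b` then lies below the move, so `b` is not the join of two of
them. -/
lemma joinIrr_of_rigid (hb : IsPartition N b) (hne : b ≠ ones N) (hij : i < j) (hbi : 1 ≤ b i)
    (hmv : IsPartition N (moveGrain i j b))
    (hrigid : ∀ x, IsPartition N x → Dom x b → ∀ k, i < k → k ≤ j → psum x k = psum b k → x = b) :
    JoinIrr N b := by
  have below : ∀ x, IsPartition N x → Dom x b → b ≠ x → Dom x (moveGrain i j b) := by
    intro x hx hxb hbx k
    show psum x k ≤ psum (moveGrain i j b) k
    by_cases hk : i < k ∧ k ≤ j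
    · have hmv := psum_moveGrain_add_one hij hbi hk.1 hk.2
      have hle := hxb.psum_le k
      have hlt : psum x k ≠ psum b k := fun h => hbx (hrigid x hx hxb k hk.1 hk.2 h).symm
      omega
    · exact psum_moveGrain_of_not_mem hij hbi (k := k) (by omega) ▸ hxb.psum_le k
  refine ⟨hb, hne, fun x y hx hy ⟨_, hxb, hyb, hleast⟩ => ?_⟩
  by_contra! hxy
  have := (hleast _ hmv (below x hx hxb hxy.1) (below y hy hyb hxy.2)).psum_le j
  have := psum_moveGrain_add_one hij hbi hij le_rfl
  omega

end joinIrr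

def shape (c p q r : ℕ) : ℕ → ℕ := fun i =>
  if i < p then c + 1 else if i < p + q then c else if i < p + q + r then 1 else 0

section shape

variable {c p q r N i j : ℕ}

lemma shape_of_lt (h : i < p) : shape c p q r i = c + 1 := if_pos h

lemma shape_of_mid (h1 : p ≤ i) (h2 : i < p + q) : shape c p q r i = c := by
  simp only [shape]; split_ifs <;> omega

lemma shape_of_right (h1 : p + q ≤ i) (h2 : i < p + q + r) : shape c p q r i = 1 := by
  simp only [shape]; split_ifs <;> omega

lemma shape_of_ge (h : p + q + r ≤ i) : shape c p q r i = 0 := by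
  simp only [shape]; split_ifs <;> omega

lemma shape_zero_left : shape (c + 1) 0 q r = shape c q 0 r := by
  funext i; simp only [shape]; split_ifs <;> omega

lemma psum_shape_of_le (h : j ≤ p) : psum (shape c p q r) j = (c + 1) * j := by
  rw [psum_eq_add_mul (Nat.zero_le j) fun i _ hi => shape_of_lt (hi.trans_le h), psum_zero,
    Nat.sub_zero]
  ring

lemma psum_shape_of_mid (h1 : p ≤ j) (h2 : j ≤ p + q) :
    psum (shape c p q r) j = (c + 1) * p + c * (j - p) := by
  rw [psum_eq_add_mul h1 fun i hi1 hi2 => shape_of_mid hi1 (by omega), psum_shape_of_le le_rfl,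
    mul_comm c]

lemma psum_shape_of_right (h1 : p + q ≤ j) (h2 : j ≤ p + q + r) :
    psum (shape c p q r) j = (c + 1) * p + c * q + (j - (p + q)) := by
  rw [psum_eq_add_mul h1 fun i hi1 hi2 => shape_of_right hi1 (by omega),
    psum_shape_of_mid (by omega) le_rfl, Nat.add_sub_cancel_left, mul_one]

lemma psum_shape_of_ge (h : p + q + r ≤ j) :
    psum (shape c p q r) j = (c + 1) * p + c * q + r := by
  rw [psum_eq_add_mul h fun i hi _ => shape_of_ge hi, psum_shape_of_right (by omega) le_rfl]
  simp

lemma isPartition_shape (hc : 1 ≤ c) (hN : (c + 1) * p + c * q + r = N) :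
    IsPartition N (shape c p q r) := by
  have : p + q + r ≤ N := by nlinarith
  refine ⟨fun _ _ h => antitone_nat_of_succ_le (fun k => ?_) h, ?_,
    fun i hi => shape_of_ge (by omega)⟩
  · simp only [shape]; split_ifs <;> omega
  · rw [← hN]; exact psum_shape_of_ge (by omega)

lemma IsPartition.total_of_shape (h : IsPartition N (shape c p q r)) :
    (c + 1) * p + c * q + r = N :=
  (psum_shape_of_ge (le_max_left _ N)).symm.trans (h.psum_of_le (le_max_right (p + q + r) N))

/-- Row by row `x` cannot exceed the shape: before `p + q` because of the partial sums from `0`,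
after it because of those from `j`. -/
lemma eq_shape_of_psum_eq (hc : 1 ≤ c) (hN : (c + 1) * p + c * q + r = N) {x : ℕ → ℕ}
    (hx : IsPartition N x) (hdom : Dom x (shape c p q r)) (hpj : p ≤ j) (hjK : j ≤ p + q)
    (hcj : c = 1 ∨ j = p + q) (heq : psum x j = psum (shape c p q r) j) :
    x = shape c p q r := by
  refine hx.eq_of_le (isPartition_shape hc hN) fun i => ?_
  have hdi := hdom.psum_le (i + 1)
  rcases lt_or_ge i p with hip | hip
  · refine apply_le_of_psum_lt hx.antitone (Nat.zero_le i) ?_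
    rw [shape_of_lt hip, psum_zero, Nat.sub_zero]
    rw [psum_shape_of_le (by omega)] at hdi
    nlinarith
  rcases lt_or_ge i (p + q) with hiK | hiK
  · refine apply_le_of_psum_lt hx.antitone (Nat.zero_le i) ?_
    rw [shape_of_mid hip hiK, psum_zero, Nat.sub_zero]
    rw [psum_shape_of_mid (by omega) (by omega)] at hdi
    obtain ⟨d, hd⟩ : ∃ d, i + 1 = p + (d + 1) := ⟨i - p, by omega⟩
    rw [hd] at hdi ⊢
    rw [Nat.add_sub_cancel_left] at hdi
    nlinarith
  refine apply_le_of_psum_lt hx.antitone (hjK.trans hiK) ?_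
  rw [heq, psum_shape_of_mid hpj hjK]
  rcases lt_or_ge i (p + q + r) with hir | hir
  · rw [shape_of_right hiK hir]
    rw [psum_shape_of_right (by omega) (by omega)] at hdi
    rcases hcj with rfl | rfl
    · omega
    · rw [Nat.add_sub_cancel_left] at *; omega
  · rw [shape_of_ge hir]
    rw [psum_shape_of_ge (by omega)] at hdi
    rcases hcj with rfl | rfl
    · omega
    · rw [Nat.add_sub_cancel_left] at *; omega

lemma joinIrr_shape (hc : 1 ≤ c) (hp : 1 ≤ p) (hc1 : c = 1 → r = 0)
    (hc2 : ¬(c = 2 ∧ 1 ≤ q ∧ 1 ≤ r)) (hN : (c + 1) * p + c * q + r = N) :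
    JoinIrr N (shape c p q r) := by
  have hb := isPartition_shape hc hN
  have hne : shape c p q r ≠ ones N := fun h => by
    have := congrFun h 0
    simp only [shape, ones] at this
    split_ifs at this <;> omega
  have hKN : p + q < N := by nlinarith
  rcases eq_or_lt_of_le hc with rfl | hc'
  · obtain rfl := hc1 rfl
    refine joinIrr_of_rigid hb hne (i := p - 1) (j := p + q) (by omega)
      (by rw [shape_of_lt (by omega)]; omega) ?_ fun x hx hdom k hk1 hk2 =>
        eq_shape_of_psum_eq le_rfl hN hx hdom (by omega) hk2 (.inl rfl)
    refine isPartition_moveGrain hb (by omega) hKN ?_ ?_ ?_ <;> simp only [shape] <;>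
      split_ifs <;> omega
  · refine joinIrr_of_rigid hb hne (i := p + q - 1) (j := p + q) (by omega)
      (by simp only [shape]; split_ifs <;> omega) ?_ fun x hx hdom k hk1 hk2 =>
        eq_shape_of_psum_eq hc hN hx hdom (by omega) hk2 (.inr (by omega))
    refine isPartition_moveGrain hb (by omega) hKN ?_ (.inl (by omega)) (.inl (by omega))
    simp only [shape]; split_ifs <;> omega

lemma not_joinIrr_shape_two (hp : 1 ≤ p) (hq : 1 ≤ q) (hr : 1 ≤ r) :
    ¬ JoinIrr N (shape 2 p q r) := by
  intro hJ
  have hN := hJ.1.total_of_shape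
  refine not_joinIrr_of_overlapping_moves hJ.1 (i := p - 1) (j := p + q) (j' := p + q + r)
    (by omega) (by omega) ?_ ?_ ?_ ?_ ?_ hJ
  any_goals simp only [shape]; split_ifs <;> omega
  · refine isPartition_moveGrain hJ.1 (by omega) (by omega) ?_ ?_ ?_ <;> simp only [shape] <;>
      split_ifs <;> omega
  · refine isPartition_moveGrain hJ.1 (by omega) (by omega) ?_ ?_ ?_ <;> simp only [shape] <;>
      split_ifs <;> omega

end shape

theorem exists_shape_of_joinIrr {N : ℕ} {b : ℕ → ℕ} (hJ : JoinIrr N b) :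
    ∃ c p q r, 1 ≤ c ∧ 1 ≤ p ∧ (c = 1 → r = 0) ∧ ¬(c = 2 ∧ 1 ≤ q ∧ 1 ≤ r) ∧
      (c + 1) * p + c * q + r = N ∧ b = shape c p q r := by
  have hb := hJ.1
  have hv := hb.two_le hJ.2.1
  obtain ⟨p, hp⟩ := hb.exists_threshold (t := b 0) (by omega)
  obtain ⟨j, hj⟩ := hb.exists_threshold (t := b 0 - 1) (by omega)
  obtain ⟨s, hs⟩ := hb.exists_threshold (t := 1) le_rfl
  obtain ⟨hp0, hpj, hbi, hmv⟩ := isPartition_moveGrain_of_threshold hb hv hp hj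
  -- a second lower move, starting where the first one ends, would split `b` as a join
  have hbj : b j ≤ 1 := by
    by_contra! hbj
    obtain ⟨T, hT⟩ := hb.exists_threshold (t := b j) (by omega)
    obtain ⟨T', hT'⟩ := hb.exists_threshold (t := b j - 1) (by omega)
    obtain ⟨hjT, hTT', hbT, hmv'⟩ := isPartition_moveGrain_of_threshold hb (by omega) hT hT'
    exact not_joinIrr_of_disjoint_moves hb (by omega) (by omega) (by omega) hbi hbT hmv hmv' hJ
  have hjs : j ≤ s := by
    have := (hj (j - 1)).2 (by omega)
    have := (hs (j - 1)).1 (by omega)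
    omega
  generalize hc : b 0 - 1 = c at hj
  have hshape : b = shape c p (j - p) (s - j) := by
    funext k
    have := hp k; have := hj k; have := hs k; have := hb.antitone (Nat.zero_le k)
    rcases le_or_gt j k with hjk | hjk
    · have := hb.antitone hjk
      simp only [shape]; split_ifs <;> omega
    · simp only [shape]; split_ifs <;> omega
  refine ⟨c, p, j - p, s - j, by omega, by omega, fun hc1 => ?_, fun ⟨hc2, hq, hr⟩ => ?_,
    (hshape ▸ hb).total_of_shape, hshape⟩
  · have := (hj j).not.2 (lt_irrefl j)
    have := (hs j).not.1 (by omega)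
    omega
  · exact not_joinIrr_shape_two hp0 hq hr (hc2 ▸ hshape ▸ hJ)

lemma twoOnes_eq_shape {n : ℕ} (hn : 2 ≤ n) : twoOnes n = shape 1 1 (n - 2) 0 := by
  funext i; simp only [twoOnes, shape]; split_ifs <;> omega

lemma twoTwoOnes_eq_shape {n : ℕ} (hn : 4 ≤ n) : twoTwoOnes n = shape 1 2 (n - 4) 0 := by
  funext i; simp only [twoTwoOnes, shape]; split_ifs <;> omega

lemma threesOnes_eq_shape (m l : ℕ) : threesOnes m l = shape 2 m 0 l := by
  funext i; simp only [threesOnes, shape]; split_ifs <;> omega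

lemma joinIrr_twoOnes {n : ℕ} (hn : 2 ≤ n) : JoinIrr n (twoOnes n) :=
  twoOnes_eq_shape hn ▸ joinIrr_shape le_rfl le_rfl (fun _ => rfl) (by omega) (by omega)

section son

variable {n : ℕ} {a b : ℕ → ℕ}

lemma IsPartition.slipperyStep1_or_nonSlipperyStep1 (ha : IsPartition n a) (h0 : a 0 = a 1 + 1)
    (h1 : 1 ≤ a 1) :
    SlipperyStep1 a ∨ NonSlipperyStep1 a := by
  obtain ⟨T, hT⟩ := ha.exists_threshold h1
  obtain ⟨l, rfl⟩ : ∃ l, T = l + 2 := ⟨T - 2, by have := (hT 1).1 le_rfl; omega⟩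
  have hplat : ∀ i ≤ l + 1, dec1 a i = dec1 a 0 := fun i hi => by
    rcases i with _ | i
    · rfl
    · have := (hT (i + 1)).2 (by omega)
      have := ha.antitone (Nat.le_add_left 1 i)
      simp only [dec1, if_pos, if_neg (Nat.succ_ne_zero i)]
      omega
  have hend : dec1 a (l + 1) = a 1 := by rw [hplat _ le_rfl]; simp only [dec1, if_pos]; omega
  have hdrop : dec1 a (l + 1 + 1) < a 1 := (hT (l + 2)).not.2 (lt_irrefl _) |> not_le.1
  by_cases hslip : dec1 a (l + 1) = dec1 a (l + 1 + 1) + 1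
  · exact .inl ⟨l + 1, ⟨by omega, hplat, hslip⟩⟩
  · exact .inr ⟨l + 1, by omega, hplat, by omega⟩

lemma son_shape {c p q r : ℕ} (hc : 1 ≤ c) (hN : (c + 1) * p + c * (q + 1) + r = n) :
    Son n (shape c p (q + 1) r) (shape c (p + 1) q r) := by
  have ha := isPartition_shape hc hN
  have hdown : shape c (p + 1) q r = downAt p (shape c p (q + 1) r) := by
    funext i; simp only [shape, downAt]; split_ifs <;> omega
  refine ⟨ha, isPartition_shape hc (by rw [← hN]; ring), ?_⟩
  rw [hdown]
  rcases p with _ | _ | l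
  · exact .inl rfl
  · exact .inr (.inl ⟨ha.slipperyStep1_or_nonSlipperyStep1 (by simp [shape])
      (by simp [shape]; omega), rfl⟩)
  · refine .inr (.inr ⟨l + 1, ⟨by omega, fun i hi => ?_, ?_⟩, rfl⟩) <;> simp only [shape] <;>
      split_ifs <;> omega

lemma downAt_self (k : ℕ) (a : ℕ → ℕ) : downAt k a k = a k + 1 := if_pos rfl

lemma downAt_of_ne {i k : ℕ} (a : ℕ → ℕ) (h : i ≠ k) : downAt k a i = a i := if_neg h

lemma Son.eq_downAt (h : Son n a b) :
    b = downAt 0 a ∨ ∃ k, b = downAt (k + 1) a ∧ a (k + 1) + 1 = a k ∧ (1 ≤ k → a k = a 0) := by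
  obtain ⟨-, -, h0 | ⟨hstep, h1⟩ | ⟨l, ⟨-, hpl, hdrop⟩, hl⟩⟩ := h
  · exact .inl h0
  · refine .inr ⟨0, h1, ?_, by omega⟩
    show a 1 + 1 = a 0
    obtain ⟨k, hk, hpl, hdrop⟩ : ∃ k, 1 ≤ k ∧ (∀ i ≤ k, dec1 a i = dec1 a 0) ∧
        dec1 a (k + 1) < dec1 a k := by
      rcases hstep with ⟨k, hk, hpl, hdrop⟩ | ⟨k, hk, hpl, hdrop⟩ <;> exact ⟨k, hk, hpl, by omega⟩
    have hdec : ∀ i, i ≠ 0 → dec1 a i = a i := fun i hi => if_neg hi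
    have hdec0 : dec1 a 0 = a 0 - 1 := if_pos rfl
    have h1 := hpl 1 hk
    have hk' := hpl k le_rfl
    rw [hdec 1 one_ne_zero, hdec0] at h1
    rw [hdec k (by omega), hdec0] at hk'
    rw [hdec (k + 1) (by omega), hdec k (by omega)] at hdrop
    omega
  · exact .inr ⟨l, hl, hdrop.symm, fun _ => hpl l le_rfl⟩

lemma not_son_twoOnes (hn : 3 ≤ n) (ha : JoinIrr n a) : ¬ Son n a (twoOnes (n + 1)) := by
  intro hson
  rcases hson.eq_downAt with hk | ⟨k, hk, hk1, hk2⟩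
  · refine ha.2.1 (funext fun i => ?_)
    have := congrFun hk i
    simp only [twoOnes, ones, downAt] at this ⊢
    split_ifs at this ⊢ <;> omega
  · have h0 : twoOnes (n + 1) 0 = a 0 := by rw [hk, downAt_of_ne a (by omega)]
    have h1 : twoOnes (n + 1) k = a k := by rw [hk, downAt_of_ne a (by omega)]
    have h2 : twoOnes (n + 1) (k + 1) = a (k + 1) + 1 := by rw [hk, downAt_self]
    simp only [twoOnes] at h0 h1 h2
    rcases Nat.eq_zero_or_pos k with rfl | hk0
    · split_ifs at h0 h1 h2 <;> omega
    · have := hk2 hk0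
      split_ifs at h0 h1 h2 <;> omega

lemma eq_twoOnes_of_son_threesOnes {m l : ℕ} (hm : 1 ≤ m) (hl : 1 ≤ l) (ha : JoinIrr n a)
    (hson : Son n a (threesOnes m l)) : a = twoOnes n := by
  have hN := (threesOnes_eq_shape m l ▸ hson.2.1).total_of_shape
  rcases hson.eq_downAt with hk | ⟨k, hk, hk1, hk2⟩
  · have hval : ∀ i, threesOnes m l i = downAt 0 a i := fun i => congrFun hk i
    obtain rfl : m = 1 := by
      have := hval 0; have := hval 1; have := ha.1.antitone (Nat.zero_le 1)
      simp only [threesOnes, downAt] at *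
      split_ifs at * <;> omega
    funext i
    have := hval i
    simp only [threesOnes, twoOnes, downAt] at this ⊢
    split_ifs at this ⊢ <;> omega
  · exfalso
    have h0 : threesOnes m l 0 = a 0 := by rw [hk, downAt_of_ne a (by omega)]
    have h1 : threesOnes m l k = a k := by rw [hk, downAt_of_ne a (by omega)]
    have h2 : threesOnes m l (k + 1) = a (k + 1) + 1 := by rw [hk, downAt_self]
    have h3 : threesOnes m l (k + 2) = a (k + 2) := by rw [hk, downAt_of_ne a (by omega)]
    have := ha.1.antitone (show k + 1 ≤ k + 2 by omega)
    simp only [threesOnes] at h0 h1 h2 h3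
    rcases lt_or_ge (k + 1) m with hkm | hkm
    · obtain rfl : m = k + 2 := by split_ifs at h2 h3 <;> omega
      refine not_joinIrr_shape_two (N := n) (p := k + 1) (q := 1) (r := l) (by omega) le_rfl hl ?_
      convert ha using 1
      funext i
      have := congrFun hk i
      simp only [threesOnes, shape, downAt] at this ⊢
      split_ifs at this ⊢ <;> omega
    · rcases Nat.eq_zero_or_pos k with rfl | hk0
      · split_ifs at h1 h2 <;> omega
      · have := hk2 hk0
        split_ifs at h0 h1 h2 <;> omega

end son

lemma eq_twoOnes_or_threesOnes_or_exists_parent {n : ℕ} {b : ℕ → ℕ} (hn : 3 ≤ n)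
    (hb : JoinIrr (n + 1) b) :
    (b = twoOnes (n + 1) ∨ ∃ m l, 1 ≤ m ∧ 1 ≤ l ∧ b = threesOnes m l) ∨
      ∃ a, JoinIrr n a ∧ ((a ≠ twoOnes n ∧ Son n a b ∧ JoinIrr (n + 1) b) ∨
        (a = twoOnes n ∧ b = twoTwoOnes (n + 1))) := by
  obtain ⟨c, p, q, r, hc, hp, hc1, hc2, hN, rfl⟩ := exists_shape_of_joinIrr hb
  by_cases hthrees : c = 2 ∧ 1 ≤ r
  · obtain ⟨rfl, hr⟩ := hthrees
    obtain rfl : q = 0 := by omega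
    exact .inl (.inr ⟨p, r, hp, hr, (threesOnes_eq_shape p r).symm⟩)
  obtain ⟨p, rfl⟩ : ∃ p', p = p' + 1 := ⟨p - 1, by omega⟩
  by_cases htwo : c = 1 ∧ p ≤ 1
  · obtain ⟨rfl, hp1⟩ := htwo
    obtain rfl := hc1 rfl
    interval_cases p
    · exact .inl (.inl (by rw [twoOnes_eq_shape (by omega)]; congr 1; omega))
    · exact .inr ⟨twoOnes n, joinIrr_twoOnes (by omega),
        .inr ⟨rfl, by rw [twoTwoOnes_eq_shape (by omega)]; congr 1; omega⟩⟩
  have hN' : (c + 1) * p + c * (q + 1) + r = n := by linarith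
  refine .inr ⟨shape c p (q + 1) r, ?_, .inl ⟨fun h => ?_, son_shape hc hN', hb⟩⟩
  · rcases Nat.eq_zero_or_pos p with rfl | hp'
    · obtain ⟨c, rfl⟩ : ∃ c', c = c' + 1 := ⟨c - 1, by omega⟩
      rw [shape_zero_left]
      exact joinIrr_shape (by omega) (by omega) (by omega) (by omega) (by linarith)
    · exact joinIrr_shape hc hp' hc1 (by omega) hN'
  · have h0 := congrFun h 0; have h1 := congrFun h 1
    simp only [shape, twoOnes] at h0 h1
    split_ifs at h0 h1 <;> omega

/-- For n ≥ 3, the join-irreducible partitions of n+1 not in the image of η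
(which sends each join-irreducible partition of n to its unique join-irreducible
son, except η(2,1,…,1) := (2,2,1,…,1)) are exactly (2,1,…,1) and the partitions
(3,…,3,1,…,1) with at least one 3 and at least one 1. -/
theorem stmt11 (n : ℕ) (hn : 3 ≤ n) :
    ∀ b, JoinIrr (n + 1) b →
      ((¬ ∃ a, JoinIrr n a ∧
          ((a ≠ twoOnes n ∧ Son n a b ∧ JoinIrr (n + 1) b) ∨
           (a = twoOnes n ∧ b = twoTwoOnes (n + 1)))) ↔
        (b = twoOnes (n + 1) ∨ ∃ m l, 1 ≤ m ∧ 1 ≤ l ∧ b = threesOnes m l)) := by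
  intro b hb
  refine ⟨fun hnot => (eq_twoOnes_or_threesOnes_or_exists_parent hn hb).resolve_right hnot, ?_⟩
  rintro (rfl | ⟨m, l, hm, hl, rfl⟩) ⟨a, ha, ⟨hne, hson, -⟩ | ⟨-, heq⟩⟩
  · exact not_son_twoOnes hn ha hson
  · have := congrFun heq 1
    simp only [twoOnes, twoTwoOnes] at this
    split_ifs at this <;> omega
  · exact hne (eq_twoOnes_of_son_threesOnes hm hl ha hson)
  · have := congrFun heq 0
    simp only [threesOnes, twoTwoOnes] at this
    split_ifs at this <;> omega
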